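/- Fix an integer d ≥ 3, δ ∈ (0, 2/(d−2)], β > 0, and ε ∈ (0,1) with 4^{d−2} ε^{(d−2)δ} ≤ 1/2. Then there is C = C(d) such that: if 0 < β ≤ d−2, then Var( Y_{ε,0} 1_{ρ_0 < T_ε} ) + E[ ρ^{2(d−2)} 1_{ρ < T_ε} ] ≤ C ε^{−(2/(d−2) − δ)(d−2−β)}; and if β ≥ d−2, then Var( Y_{ε,0} 1_{ρ_0 < T_ε} ) + E[ ρ^{2(d−2)} 1_{ρ < T_ε} ] ≤ C. -/

import Mathlib

/-! The variance is at most the second moment, and `Y_{ε,0}² ≤ 4 ρ^{2(d−2)}` on `{ρ < T_ε}`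
because `4^{d−2} ε² T_ε^{d−2} = 4^{d−2} ε^{(d−2)δ} ≤ 1/2` keeps the denominator of `Y_{ε,0}`
above `1/2`. Both terms are thus controlled by the truncated moment `E[ρ^{2(d−2)} 1_{ρ<T_ε}]`.
For `β ≤ d−2` we bound `x^{2(d−2)} ≤ T_ε^{d−2−β} x^{d−2+β}` on `{x < T_ε}`, for `β ≥ d−2` we
bound `x^{2(d−2)} ≤ 1 + x^{d−2+β}`, and in both cases conclude with `E[ρ^{d−2+β}] ≤ 1`. -/

open MeasureTheory ProbabilityTheory

noncomputable section

/-- The truncation threshold `T_ε := ε^{−2/(d−2)+δ}`. -/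
def Ttrunc (d : ℕ) (ε δ : ℝ) : ℝ := ε ^ (-(2 / ((d : ℝ) - 2)) + δ)

/-- `Y_{ε} 1_{ρ < T_ε}` as a function of the mark:
`x ↦ x^{d−2} / (1 − 4^{d−2} ε² x^{d−2})` on `{x < T_ε}`, `0` otherwise. -/
def Yind (d : ℕ) (ε δ : ℝ) : ℝ → ℝ :=
  Set.indicator {x | x < Ttrunc d ε δ}
    (fun x => x ^ ((d : ℝ) - 2) / (1 - 4 ^ ((d : ℝ) - 2) * ε ^ 2 * x ^ ((d : ℝ) - 2)))

open Set Real

def truncPow (T p : ℝ) : ℝ → ℝ := {x | x < T}.indicator (· ^ p)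

section truncPow

variable {T p q x : ℝ}

lemma truncPow_of_lt (hxT : x < T) : truncPow T p x = x ^ p :=
  indicator_of_mem (s := {x | x < T}) hxT _

lemma truncPow_of_not_lt (hxT : ¬x < T) : truncPow T p x = 0 :=
  indicator_of_notMem (s := {x | x < T}) hxT _

lemma truncPow_nonneg (hx : 0 ≤ x) : 0 ≤ truncPow T p x :=
  indicator_apply_nonneg fun _ => rpow_nonneg hx p

lemma truncPow_le_rpow (hx : 0 ≤ x) : truncPow T p x ≤ x ^ p :=
  indicator_apply_le' (fun _ => le_rfl) fun _ => rpow_nonneg hx p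

lemma truncPow_le_rpow_mul_rpow (hx : 0 ≤ x) (hT : 0 ≤ T) (hq : 0 ≤ q) (hqp : q ≤ p) :
    truncPow T p x ≤ T ^ (p - q) * x ^ q := by
  by_cases hxT : x < T
  · calc truncPow T p x = x ^ (p - q) * x ^ q := by
          rw [truncPow_of_lt hxT, ← rpow_add_of_nonneg hx (by linarith) hq, sub_add_cancel]
      _ ≤ T ^ (p - q) * x ^ q := by gcongr
  · rw [truncPow_of_not_lt hxT]
    positivity

end truncPow

lemma rpow_le_one_add_rpow {x p q : ℝ} (hx : 0 ≤ x) (hp : 0 ≤ p) (hpq : p ≤ q) :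
    x ^ p ≤ 1 + x ^ q := by
  rcases le_total x 1 with hx1 | hx1
  · linarith [rpow_le_one hx hx1 hp, rpow_nonneg hx q]
  · linarith [rpow_le_rpow_of_exponent_le hx1 hpq]

lemma sq_div_one_sub_mul_le {a c : ℝ} (hca : c * a ≤ 1 / 2) :
    (a / (1 - c * a)) ^ 2 ≤ 4 * a ^ 2 := by
  have hden : 1 / 4 ≤ (1 - c * a) ^ 2 := by nlinarith
  rw [div_pow, div_le_iff₀ (by linarith)]
  nlinarith [mul_le_mul_of_nonneg_left hden (sq_nonneg a)]

section Yind

variable {d : ℕ} {ε δ : ℝ}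

lemma sq_mul_Ttrunc_rpow (hε : 0 < ε) (hd : (d : ℝ) - 2 ≠ 0) :
    ε ^ 2 * Ttrunc d ε δ ^ ((d : ℝ) - 2) = ε ^ (((d : ℝ) - 2) * δ) := by
  rw [Ttrunc, ← rpow_natCast, ← rpow_mul hε.le, ← rpow_add hε]
  congr 1
  field_simp
  push_cast
  ring

lemma Ttrunc_rpow (hε : 0 ≤ ε) (p : ℝ) :
    Ttrunc d ε δ ^ p = ε ^ (-(2 / ((d : ℝ) - 2) - δ) * p) := by
  rw [Ttrunc, ← rpow_mul hε]
  ring_nf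

lemma measurable_Yind : Measurable (Yind d ε δ) :=
  Measurable.indicator (by fun_prop) measurableSet_Iio

lemma Yind_sq_le (hd : 0 < (d : ℝ) - 2) (hε : 0 < ε)
    (hsmall : (4 : ℝ) ^ ((d : ℝ) - 2) * ε ^ (((d : ℝ) - 2) * δ) ≤ 1 / 2) {x : ℝ} (hx : 0 ≤ x) :
    Yind d ε δ x ^ 2 ≤ 4 * truncPow (Ttrunc d ε δ) (2 * ((d : ℝ) - 2)) x := by
  by_cases hxT : x < Ttrunc d ε δ
  · have hden : 4 ^ ((d : ℝ) - 2) * ε ^ 2 * x ^ ((d : ℝ) - 2) ≤ 1 / 2 :=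
      calc 4 ^ ((d : ℝ) - 2) * ε ^ 2 * x ^ ((d : ℝ) - 2)
          ≤ 4 ^ ((d : ℝ) - 2) * (ε ^ 2 * Ttrunc d ε δ ^ ((d : ℝ) - 2)) := by
            rw [mul_assoc]
            gcongr
        _ ≤ 1 / 2 := by rwa [sq_mul_Ttrunc_rpow hε hd.ne']
    rw [truncPow_of_lt hxT, Yind, indicator_of_mem (s := {x | x < Ttrunc d ε δ}) hxT, mul_comm 2,
      rpow_mul hx, rpow_two]
    exact sq_div_one_sub_mul_le hden
  · rw [truncPow_of_not_lt hxT, Yind, indicator_of_notMem (s := {x | x < Ttrunc d ε δ}) hxT]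
    norm_num

end Yind

section Probability

variable {Ω : Type*} [MeasurableSpace Ω] {P : Measure Ω}

lemma integrable_of_lintegral_ofReal_le_one {Φ : Ω → ℝ} (hΦ : Measurable Φ) (hΦ0 : ∀ ω, 0 ≤ Φ ω)
    (h : ∫⁻ ω, ENNReal.ofReal (Φ ω) ∂P ≤ 1) : Integrable Φ P :=
  ⟨hΦ.aestronglyMeasurable, (hasFiniteIntegral_iff_ofReal (.of_forall hΦ0)).2
    (h.trans_lt ENNReal.one_lt_top)⟩

lemma integral_le_one_of_lintegral_ofReal_le_one {Φ : Ω → ℝ} (hΦ : Measurable Φ)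
    (hΦ0 : ∀ ω, 0 ≤ Φ ω) (h : ∫⁻ ω, ENNReal.ofReal (Φ ω) ∂P ≤ 1) : ∫ ω, Φ ω ∂P ≤ 1 := by
  rw [integral_eq_lintegral_of_nonneg_ae (.of_forall hΦ0) hΦ.aestronglyMeasurable]
  exact ENNReal.toReal_le_of_le_ofReal zero_le_one (by simpa using h)

variable [IsProbabilityMeasure P]

lemma integral_le_add_mul_integral {f Φ : Ω → ℝ} {a b : ℝ} (hf : ∀ ω, 0 ≤ f ω)
    (hΦ : Integrable Φ P) (hfΦ : ∀ ω, f ω ≤ a + b * Φ ω) :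
    ∫ ω, f ω ∂P ≤ a + b * ∫ ω, Φ ω ∂P := by
  calc ∫ ω, f ω ∂P ≤ ∫ ω, a + b * Φ ω ∂P :=
        integral_mono_of_nonneg (.of_forall hf) ((integrable_const a).add (hΦ.const_mul b))
          (.of_forall hfΦ)
    _ = a + b * ∫ ω, Φ ω ∂P := by
        rw [integral_add (integrable_const a) (hΦ.const_mul b), integral_const_mul]
        simp

lemma variance_add_integral_le {X G Φ : Ω → ℝ} {a b : ℝ} (hX : AEStronglyMeasurable X P)
    (hXG : ∀ ω, X ω ^ 2 ≤ 4 * G ω) (hG : ∀ ω, 0 ≤ G ω) (hGΦ : ∀ ω, G ω ≤ a + b * Φ ω)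
    (hΦ : Integrable Φ P) (hΦ1 : ∫ ω, Φ ω ∂P ≤ 1) (hb : 0 ≤ b) :
    variance X P + ∫ ω, G ω ∂P ≤ 5 * (a + b) := by
  have hvar : variance X P ≤ ∫ ω, X ω ^ 2 ∂P := variance_le_expectation_sq hX
  have hX2 : ∫ ω, X ω ^ 2 ∂P ≤ 4 * a + 4 * b * ∫ ω, Φ ω ∂P :=
    integral_le_add_mul_integral (fun ω => sq_nonneg _) hΦ
      fun ω => by linarith [hXG ω, hGΦ ω]
  have hG1 : ∫ ω, G ω ∂P ≤ a + b * ∫ ω, Φ ω ∂P := integral_le_add_mul_integral hG hΦ hGΦ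
  nlinarith

end Probability

/-- bounds on `Var(Y_{ε,0} 1_{ρ₀<T_ε}) + E[ρ^{2(d−2)} 1_{ρ<T_ε}]`, depending
on whether `β ≤ d−2` or `β ≥ d−2`, with `C = C(d)`. -/
theorem truncated_variance_moment_bound (d : ℕ) (hd : 3 ≤ d) :
    ∃ C > 0, ∀ (δ β ε : ℝ),
      δ ∈ Set.Ioc (0 : ℝ) (2 / ((d : ℝ) - 2)) → 0 < β →
      ε ∈ Set.Ioo (0 : ℝ) 1 →
      (4 : ℝ) ^ ((d : ℝ) - 2) * ε ^ (((d : ℝ) - 2) * δ) ≤ 1 / 2 →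
      ∀ (Ω : Type) (_ : MeasurableSpace Ω) (P : Measure Ω), IsProbabilityMeasure P →
      ∀ (ρ₀ : Ω → ℝ), Measurable ρ₀ → (∀ ω, 0 ≤ ρ₀ ω) →
        (∫⁻ ω, ENNReal.ofReal (ρ₀ ω ^ ((d : ℝ) - 2 + β)) ∂P ≤ 1) →
        ((β ≤ (d : ℝ) - 2 →
            variance (fun ω => Yind d ε δ (ρ₀ ω)) P
              + (∫ ω, Set.indicator {x | x < Ttrunc d ε δ}
                  (fun x => x ^ (2 * ((d : ℝ) - 2))) (ρ₀ ω) ∂P)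
            ≤ C * ε ^ (-(2 / ((d : ℝ) - 2) - δ) * ((d : ℝ) - 2 - β))) ∧
         ((d : ℝ) - 2 ≤ β →
            variance (fun ω => Yind d ε δ (ρ₀ ω)) P
              + (∫ ω, Set.indicator {x | x < Ttrunc d ε δ}
                  (fun x => x ^ (2 * ((d : ℝ) - 2))) (ρ₀ ω) ∂P)
            ≤ C)) := by
  refine ⟨10, by norm_num, fun δ β ε _ hβ ⟨hε, _⟩ hsmall Ω _ P _ ρ₀ hρ hρ0 hmom => ?_⟩
  have hm : (0 : ℝ) < (d : ℝ) - 2 := by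
    have : (3 : ℝ) ≤ d := by exact_mod_cast hd
    linarith
  have hΦ : Measurable fun ω => ρ₀ ω ^ ((d : ℝ) - 2 + β) := by fun_prop
  have hΦ0 (ω : Ω) : 0 ≤ ρ₀ ω ^ ((d : ℝ) - 2 + β) := rpow_nonneg (hρ0 ω) _
  have hΦint := integrable_of_lintegral_ofReal_le_one hΦ hΦ0 hmom
  have hΦ1 := integral_le_one_of_lintegral_ofReal_le_one hΦ hΦ0 hmom
  have hX : AEStronglyMeasurable (fun ω => Yind d ε δ (ρ₀ ω)) P :=
    (measurable_Yind.comp hρ).aestronglyMeasurable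
  have hXG (ω : Ω) := Yind_sq_le hm hε hsmall (hρ0 ω)
  have hG (ω : Ω) : 0 ≤ truncPow (Ttrunc d ε δ) (2 * ((d : ℝ) - 2)) (ρ₀ ω) :=
    truncPow_nonneg (hρ0 ω)
  refine ⟨fun hβm => ?_, fun hmβ => ?_⟩
  · have hT : 0 ≤ Ttrunc d ε δ := rpow_nonneg hε.le _
    refine (variance_add_integral_le hX hXG hG (a := 0) (fun ω => by
      simpa using truncPow_le_rpow_mul_rpow (hρ0 ω) hT (by linarith) (by linarith))
      hΦint hΦ1 (rpow_nonneg hT _)).trans ?_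
    rw [Ttrunc_rpow hε.le, show 2 * ((d : ℝ) - 2) - ((d : ℝ) - 2 + β) = (d : ℝ) - 2 - β by ring]
    linarith [rpow_nonneg hε.le (-(2 / ((d : ℝ) - 2) - δ) * ((d : ℝ) - 2 - β))]
  · refine (variance_add_integral_le hX hXG hG (a := 1) (b := 1) (fun ω => by
      simpa using (truncPow_le_rpow (hρ0 ω)).trans
        (rpow_le_one_add_rpow (hρ0 ω) (by linarith) (by linarith)))
      hΦint hΦ1 zero_le_one).trans ?_
    norm_num
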